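/- arXiv:2312.04767 — 3 statements merged into one kernel-verified Lean document; each statement's English description precedes it below -/
import Mathlib

section
/- Let n, m ∈ ℕ, T > 0, U ⊆ ℝᵐ, f : ℝⁿ × ℝᵐ → ℝⁿ, L : ℝⁿ × ℝᵐ → ℝ, ψ : ℝⁿ → ℝ, and let W : ℝⁿ × ℝ → ℝ be continuously differentiable on ℝⁿ × [0, T]. Assume (i) for every x ∈ ℝⁿ, t ∈ [0, T] and u ∈ U: ∂W/∂t(x,t) + L(x,u) + ⟨∇ₓW(x,t), f(x,u)⟩ ≥ 0, and (ii) W(x,T) = ψ(x) for all x ∈ ℝⁿ. Then for every control u : [0,T] → U and every absolutely continuous trajectory x : [0,T] → ℝⁿ satisfying x'(t) = f(x(t), u(t)) for all t ∈ [0,T], with t ↦ L(x(t),u(t)) integrable, the total cost satisfies ∫₀ᵀ L(x(t),u(t)) dt + ψ(x(T)) ≥ W(x(0), 0). -/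
open MeasureTheory Set

/-!
Along an admissible trajectory the HJB inequality says exactly that `t ↦ W (x t, t)` decreases
at rate at most `L (x t, u t)`. Integrating this differential inequality over `[0, T]` and using
`W (·, T) = ψ` gives `W (x 0, 0) - ψ (x T) ≤ ∫₀ᵀ L`.
-/

theorem HasFDerivWithinAt.comp_hasDerivWithinAt_graph
    {E F : Type*} [NormedAddCommGroup E] [NormedSpace ℝ E]
    [NormedAddCommGroup F] [NormedSpace ℝ F]
    {W : E × ℝ → F} {W' : E × ℝ →L[ℝ] F} {x : ℝ → E} {x' : E} {s : Set ℝ} {t : ℝ}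
    (hW : HasFDerivWithinAt W W' (univ ×ˢ s) (x t, t)) (hx : HasDerivWithinAt x x' s t) :
    HasDerivWithinAt (fun τ => W (x τ, τ)) (W' (x', 1)) s t :=
  hW.comp_hasDerivWithinAt_of_eq t (hx.prodMk (hasDerivWithinAt_id t s))
    (fun _ hτ => ⟨mem_univ _, hτ⟩) rfl

theorem intervalIntegral.sub_le_integral_of_hasDerivWithinAt_Icc {g g' φ : ℝ → ℝ} {a b : ℝ}
    (hab : a ≤ b) (hderiv : ∀ t ∈ Icc a b, HasDerivWithinAt g (g' t) (Icc a b) t)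
    (hφ : IntervalIntegrable φ volume a b) (hg'φ : ∀ t ∈ Ioo a b, g' t ≤ φ t) :
    g b - g a ≤ ∫ t in a..b, φ t :=
  sub_le_integral_of_hasDeriv_right_of_le hab
    (fun t ht => (hderiv t ht).continuousWithinAt)
    (fun t ht => ((hderiv t (Ioo_subset_Icc_self ht)).hasDerivAt
      (Icc_mem_nhds ht.1 ht.2)).hasDerivWithinAt)
    ((integrableOn_Icc_iff_integrableOn_Ioc).2 hφ.1) hg'φ

/-- Verification (lower-bound) half of Theorem 2 of the paper: if
`W : ℝⁿ × ℝ → ℝ` is `C¹` on `ℝⁿ × [0,T]`, satisfies the HJB inequality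
`∂W/∂t(x,t) + L(x,u) + ⟨∇ₓW(x,t), f(x,u)⟩ ≥ 0` for all `x`, `t ∈ [0,T]`,
`u ∈ U` (expressed via the derivative of `W` in the direction `(f x u, 1)`),
and the terminal condition `W(x,T) = ψ x`, then the cost of every admissible
trajectory of `ẋ = f(x,u)` is at least `W(x(0), 0)`. -/
theorem hjb_verification_lower_bound
    (n m : ℕ) (T : ℝ) (hT : 0 < T)
    (U : Set (EuclideanSpace ℝ (Fin m)))
    (f : EuclideanSpace ℝ (Fin n) → EuclideanSpace ℝ (Fin m) → EuclideanSpace ℝ (Fin n))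
    (L : EuclideanSpace ℝ (Fin n) → EuclideanSpace ℝ (Fin m) → ℝ)
    (ψ : EuclideanSpace ℝ (Fin n) → ℝ)
    (W : EuclideanSpace ℝ (Fin n) × ℝ → ℝ)
    (hW : ContDiffOn ℝ 1 W (Set.univ ×ˢ Set.Icc 0 T))
    (hHJB : ∀ x : EuclideanSpace ℝ (Fin n), ∀ t ∈ Set.Icc (0:ℝ) T, ∀ u ∈ U,
      0 ≤ fderivWithin ℝ W (Set.univ ×ˢ Set.Icc 0 T) (x, t) (f x u, 1) + L x u)
    (hterm : ∀ x : EuclideanSpace ℝ (Fin n), W (x, T) = ψ x)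
    (u : ℝ → EuclideanSpace ℝ (Fin m)) (hu : ∀ t ∈ Set.Icc (0:ℝ) T, u t ∈ U)
    (x : ℝ → EuclideanSpace ℝ (Fin n))
    (hx : ∀ t ∈ Set.Icc (0:ℝ) T, HasDerivAt x (f (x t) (u t)) t)
    (hint : IntervalIntegrable (fun t => L (x t) (u t)) volume 0 T) :
    W (x 0, 0) ≤ (∫ t in (0:ℝ)..T, L (x t) (u t)) + ψ (x T) := by
  have hvalue_rate : ∀ t ∈ Icc (0:ℝ) T, HasDerivWithinAt (fun τ => -W (x τ, τ))
      (-fderivWithin ℝ W (univ ×ˢ Icc 0 T) (x t, t) (f (x t) (u t), 1)) (Icc 0 T) t :=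
    fun t ht => ((hW.differentiableOn one_ne_zero (x t, t) ⟨mem_univ _, ht⟩).hasFDerivWithinAt
      |>.comp_hasDerivWithinAt_graph (hx t ht).hasDerivWithinAt).neg
  have hvalue_drop := intervalIntegral.sub_le_integral_of_hasDerivWithinAt_Icc hT.le hvalue_rate hint
    fun t ht => neg_le_iff_add_nonneg'.2 <|
      hHJB (x t) t (Ioo_subset_Icc_self ht) (u t) (hu t (Ioo_subset_Icc_self ht))
  rw [hterm] at hvalue_drop
  linarith
end

section
/- Let n, m ∈ ℕ, M, γ, ε ≥ 0, T > 0, and let f : ℝⁿ × ℝᵐ → ℝⁿ satisfy ‖f(x,u) − f(y,v)‖ ≤ M(‖x − y‖ + ‖u − v‖) for all x, y, u, v. Let u, û : [0,T] → ℝᵐ be measurable with ∫₀ᵀ ‖u(s) − û(s)‖ ds ≤ ε, and let x, x̂ : [0,T] → ℝⁿ be continuous solutions of x(t) = x(0) + ∫₀ᵗ f(x(s),u(s)) ds and x̂(t) = x̂(0) + ∫₀ᵗ f(x̂(s),û(s)) ds with x(0) = x̂(0). Let V, V̂ : ℝⁿ × [0,T] → ℝ satisfy (i) the uniform Lipschitz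 condition |V(y,t) − V(z,t)| ≤ γ ‖y − z‖ for all y, z ∈ ℝⁿ, t ∈ [0,T], and (ii) the uniform approximation bound |V(y,t) − V̂(y,t)| ≤ ε for all y ∈ ℝⁿ, t ∈ [0,T]. Then for every t ∈ [0,T], setting β = M e^{M t}, one has |V(x(t), t) − V̂(x̂(t), t)| ≤ (γβ + 1) ε. -/
/-!
Subtracting the two integral equations and using the Lipschitz bound on `f` gives
`‖x t - x̂ t‖ ≤ M ‖u - û‖_{L¹} + M ∫₀ᵗ ‖x - x̂‖`, so Grönwall's inequality in integral form
bounds the trajectory deviation by `M e^{M t} ε`. The error in the value then splits, by the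
triangle inequality through `V (x̂ t) t`, into a Lipschitz term `γ ‖x t - x̂ t‖` and an
approximation term `ε`.
-/

open MeasureTheory Set Real

theorem const_add_mul_gronwallBound_zero (K c x : ℝ) :
    c + K * gronwallBound 0 K c x = c * exp (K * x) := by
  rcases eq_or_ne K 0 with rfl | hK
  · simp [gronwallBound_K0]
  · rw [gronwallBound_of_K_ne_0 hK]
    field_simp
    ring

theorem le_mul_exp_of_le_add_mul_integral {g : ℝ → ℝ} {a b c K : ℝ} (hg : Continuous g)
    (hK : 0 ≤ K) (h : ∀ r ∈ Icc a b, g r ≤ c + K * ∫ s in a..r, g s) :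
    ∀ r ∈ Icc a b, g r ≤ c * exp (K * (r - a)) := by
  set G : ℝ → ℝ := fun r => ∫ s in a..r, g s
  have hG : ∀ r, HasDerivAt G (g r) r := fun r =>
    (hg.integral_hasStrictDerivAt a r).hasDerivAt
  have hG_le : ∀ r ∈ Icc a b, G r ≤ gronwallBound 0 K c (r - a) := by
    refine le_gronwallBound_of_liminf_deriv_right_le (f' := g)
      (fun r _ => (hG r).continuousAt.continuousWithinAt) ?_ (by simp [G]) ?_
    · exact fun r _ _ hr => (hG r).hasDerivWithinAt.liminf_right_slope_le hr
    · intro r hr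
      linarith [h r (Ico_subset_Icc_self hr)]
  intro r hr
  calc g r ≤ c + K * G r := h r hr
    _ ≤ c + K * gronwallBound 0 K c (r - a) := by gcongr; exact hG_le r hr
    _ = c * exp (K * (r - a)) := const_add_mul_gronwallBound_zero K c (r - a)

section TrajectoryDeviation

variable {E U : Type*} [NormedAddCommGroup E] [NormedSpace ℝ E] [NormedAddCommGroup U]
  {f : E → U → E} {M T : ℝ} {u uhat : ℝ → U} {x xhat : ℝ → E}

theorem norm_sub_le_add_mul_integral_of_integral_eq
    (hf : ∀ (y z : E) (v w : U), ‖f y v - f z w‖ ≤ M * (‖y - z‖ + ‖v - w‖)) (hM : 0 ≤ M)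
    (hintu : IntervalIntegrable (fun s => ‖u s - uhat s‖) volume 0 T)
    (hxc : Continuous x) (hxhatc : Continuous xhat)
    (hintx : IntervalIntegrable (fun s => f (x s) (u s)) volume 0 T)
    (hintxhat : IntervalIntegrable (fun s => f (xhat s) (uhat s)) volume 0 T)
    (hx : ∀ t ∈ Icc (0:ℝ) T, x t = x 0 + ∫ s in (0:ℝ)..t, f (x s) (u s))
    (hxhat : ∀ t ∈ Icc (0:ℝ) T, xhat t = xhat 0 + ∫ s in (0:ℝ)..t, f (xhat s) (uhat s))
    (hx0 : x 0 = xhat 0) :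
    ∀ r ∈ Icc (0:ℝ) T, ‖x r - xhat r‖ ≤
      M * (∫ s in (0:ℝ)..T, ‖u s - uhat s‖) + M * ∫ s in (0:ℝ)..r, ‖x s - xhat s‖ := by
  intro r hr
  have hsub : uIcc 0 r ⊆ uIcc 0 T := uIcc_subset_uIcc_left (Icc_subset_uIcc hr)
  have hintx_r := hintx.mono_set hsub
  have hintxhat_r := hintxhat.mono_set hsub
  have hintu_r := hintu.mono_set hsub
  have hintdev_r : IntervalIntegrable (fun s => ‖x s - xhat s‖) volume 0 r :=
    ((hxc.sub hxhatc).norm).intervalIntegrable 0 r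
  have hdiff : x r - xhat r = ∫ s in (0:ℝ)..r, (f (x s) (u s) - f (xhat s) (uhat s)) := by
    rw [hx r hr, hxhat r hr, hx0, intervalIntegral.integral_sub hintx_r hintxhat_r]
    abel
  calc ‖x r - xhat r‖
      ≤ ∫ s in (0:ℝ)..r, ‖f (x s) (u s) - f (xhat s) (uhat s)‖ := by
        rw [hdiff]; exact intervalIntegral.norm_integral_le_integral_norm hr.1
    _ ≤ ∫ s in (0:ℝ)..r, M * (‖x s - xhat s‖ + ‖u s - uhat s‖) :=
        intervalIntegral.integral_mono_on hr.1 (hintx_r.sub hintxhat_r).norm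
          ((hintdev_r.add hintu_r).const_mul M) fun s _ => hf _ _ _ _
    _ = M * (∫ s in (0:ℝ)..r, ‖u s - uhat s‖) + M * ∫ s in (0:ℝ)..r, ‖x s - xhat s‖ := by
        rw [intervalIntegral.integral_const_mul, intervalIntegral.integral_add hintdev_r hintu_r]
        ring
    _ ≤ M * (∫ s in (0:ℝ)..T, ‖u s - uhat s‖) + M * ∫ s in (0:ℝ)..r, ‖x s - xhat s‖ := by
        gcongr
        exact intervalIntegral.integral_mono_interval le_rfl hr.1 hr.2
          (Filter.Eventually.of_forall fun s => norm_nonneg _) hintu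

theorem norm_sub_le_mul_exp_mul_integral_of_integral_eq
    (hf : ∀ (y z : E) (v w : U), ‖f y v - f z w‖ ≤ M * (‖y - z‖ + ‖v - w‖)) (hM : 0 ≤ M)
    (hintu : IntervalIntegrable (fun s => ‖u s - uhat s‖) volume 0 T)
    (hxc : Continuous x) (hxhatc : Continuous xhat)
    (hintx : IntervalIntegrable (fun s => f (x s) (u s)) volume 0 T)
    (hintxhat : IntervalIntegrable (fun s => f (xhat s) (uhat s)) volume 0 T)
    (hx : ∀ t ∈ Icc (0:ℝ) T, x t = x 0 + ∫ s in (0:ℝ)..t, f (x s) (u s))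
    (hxhat : ∀ t ∈ Icc (0:ℝ) T, xhat t = xhat 0 + ∫ s in (0:ℝ)..t, f (xhat s) (uhat s))
    (hx0 : x 0 = xhat 0) :
    ∀ t ∈ Icc (0:ℝ) T, ‖x t - xhat t‖ ≤
      M * exp (M * t) * ∫ s in (0:ℝ)..T, ‖u s - uhat s‖ := by
  intro t ht
  have hdev := le_mul_exp_of_le_add_mul_integral (g := fun s => ‖x s - xhat s‖) (by fun_prop) hM
    (norm_sub_le_add_mul_integral_of_integral_eq hf hM hintu hxc hxhatc hintx hintxhat hx hxhat
      hx0) t ht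
  rw [sub_zero] at hdev
  linarith

end TrajectoryDeviation

theorem value_function_approximation_error_bound_general
    (n m : ℕ) (M γ ε T : ℝ) (hM : 0 ≤ M) (hγ : 0 ≤ γ)
    (f : EuclideanSpace ℝ (Fin n) → EuclideanSpace ℝ (Fin m) → EuclideanSpace ℝ (Fin n))
    (hf : ∀ (x y : EuclideanSpace ℝ (Fin n)) (u v : EuclideanSpace ℝ (Fin m)),
      ‖f x u - f y v‖ ≤ M * (‖x - y‖ + ‖u - v‖))
    (u uhat : ℝ → EuclideanSpace ℝ (Fin m))
    (hintu : IntervalIntegrable (fun s => ‖u s - uhat s‖) volume 0 T)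
    (huerr : (∫ s in (0:ℝ)..T, ‖u s - uhat s‖) ≤ ε)
    (x xhat : ℝ → EuclideanSpace ℝ (Fin n))
    (hxc : Continuous x) (hxhatc : Continuous xhat)
    (hintx : IntervalIntegrable (fun s => f (x s) (u s)) volume 0 T)
    (hintxhat : IntervalIntegrable (fun s => f (xhat s) (uhat s)) volume 0 T)
    (hx : ∀ t ∈ Set.Icc (0:ℝ) T, x t = x 0 + ∫ s in (0:ℝ)..t, f (x s) (u s))
    (hxhat : ∀ t ∈ Set.Icc (0:ℝ) T,
      xhat t = xhat 0 + ∫ s in (0:ℝ)..t, f (xhat s) (uhat s))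
    (hx0 : x 0 = xhat 0)
    (V Vhat : EuclideanSpace ℝ (Fin n) → ℝ → ℝ)
    (hVLip : ∀ (y z : EuclideanSpace ℝ (Fin n)), ∀ t ∈ Set.Icc (0:ℝ) T,
      |V y t - V z t| ≤ γ * ‖y - z‖)
    (hVapprox : ∀ (y : EuclideanSpace ℝ (Fin n)), ∀ t ∈ Set.Icc (0:ℝ) T,
      |V y t - Vhat y t| ≤ ε) :
    ∀ t ∈ Set.Icc (0:ℝ) T,
      |V (x t) t - Vhat (xhat t) t| ≤ (γ * (M * Real.exp (M * t)) + 1) * ε := by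
  intro t ht
  have hdev := norm_sub_le_mul_exp_mul_integral_of_integral_eq hf hM hintu hxc hxhatc hintx
    hintxhat hx hxhat hx0 t ht
  calc |V (x t) t - Vhat (xhat t) t|
      ≤ |V (x t) t - V (xhat t) t| + |V (xhat t) t - Vhat (xhat t) t| := abs_sub_le _ _ _
    _ ≤ γ * ‖x t - xhat t‖ + ε := add_le_add (hVLip _ _ t ht) (hVapprox _ t ht)
    _ ≤ γ * (M * exp (M * t) * ε) + ε := by grw [hdev, huerr]
    _ = (γ * (M * exp (M * t)) + 1) * ε := by ring

/-- Theorem 4 of the paper: let `V` be the true value function, globally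
`γ`-Lipschitz in the state uniformly in `t ∈ [0,T]`, and `V̂` a function
approximator accurate to within `ε` uniformly; let `û` be an `ε`-accurate
(in `L¹`) approximant of the optimal control `u`, and let `x`, `x̂` be the
trajectories of `ẋ = f(x,u)` (with `f` jointly `M`-Lipschitz) generated by
`u` and `û` from the same initial state.  Then for every `t ∈ [0,T]`, with
`β = M e^{M t}`, one has `|V(x(t),t) − V̂(x̂(t),t)| ≤ (γβ + 1) ε`. -/
theorem value_function_approximation_error_bound
    (n m : ℕ) (M γ ε T : ℝ) (hM : 0 ≤ M) (hγ : 0 ≤ γ) (hε : 0 ≤ ε) (hT : 0 < T)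
    (f : EuclideanSpace ℝ (Fin n) → EuclideanSpace ℝ (Fin m) → EuclideanSpace ℝ (Fin n))
    (hf : ∀ (x y : EuclideanSpace ℝ (Fin n)) (u v : EuclideanSpace ℝ (Fin m)),
      ‖f x u - f y v‖ ≤ M * (‖x - y‖ + ‖u - v‖))
    (u uhat : ℝ → EuclideanSpace ℝ (Fin m))
    (hum : Measurable u) (huhatm : Measurable uhat)
    (hintu : IntervalIntegrable (fun s => ‖u s - uhat s‖) volume 0 T)
    (huerr : (∫ s in (0:ℝ)..T, ‖u s - uhat s‖) ≤ ε)
    (x xhat : ℝ → EuclideanSpace ℝ (Fin n))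
    (hxc : Continuous x) (hxhatc : Continuous xhat)
    (hintx : IntervalIntegrable (fun s => f (x s) (u s)) volume 0 T)
    (hintxhat : IntervalIntegrable (fun s => f (xhat s) (uhat s)) volume 0 T)
    (hx : ∀ t ∈ Set.Icc (0:ℝ) T, x t = x 0 + ∫ s in (0:ℝ)..t, f (x s) (u s))
    (hxhat : ∀ t ∈ Set.Icc (0:ℝ) T,
      xhat t = xhat 0 + ∫ s in (0:ℝ)..t, f (xhat s) (uhat s))
    (hx0 : x 0 = xhat 0)
    (V Vhat : EuclideanSpace ℝ (Fin n) → ℝ → ℝ)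
    (hVLip : ∀ (y z : EuclideanSpace ℝ (Fin n)), ∀ t ∈ Set.Icc (0:ℝ) T,
      |V y t - V z t| ≤ γ * ‖y - z‖)
    (hVapprox : ∀ (y : EuclideanSpace ℝ (Fin n)), ∀ t ∈ Set.Icc (0:ℝ) T,
      |V y t - Vhat y t| ≤ ε) :
    ∀ t ∈ Set.Icc (0:ℝ) T,
      |V (x t) t - Vhat (xhat t) t| ≤ (γ * (M * Real.exp (M * t)) + 1) * ε :=
  value_function_approximation_error_bound_general n m M γ ε T hM hγ f hf u uhat hintu huerr x xhat
    hxc hxhatc hintx hintxhat hx hxhat hx0 V Vhat hVLip hVapprox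
end

section
/- Let n, m ∈ ℕ and p ∈ [1, ∞). For every function f* ∈ L^p(ℝⁿ; ℝᵐ) and every ε > 0, there exists a feedforward ReLU neural network g : ℝⁿ → ℝᵐ with input dimension n, output dimension m, an arbitrary (finite) number of hidden layers each of width exactly n + m + 1, ReLU activation ρ(x) = max(x, 0) applied componentwise in the hidden layers, and identity activation in the output layer — i.e., g = A_{k+1} ∘ σ ∘ A_k ∘ σ ∘ ⋯ ∘ σ ∘ A_1 for some k ≥ 1, where A_1 : ℝⁿ → ℝ^{n+m+1}, A_2, …, A_k : ℝ^{n+m+1} → ℝ^{n+m+1}, A_{k+1} : ℝ^{n+m+1} → ℝᵐ are affine maps and σ is the componentwise ReLU — such that ‖f* − g‖_{L^p} ≤ ε. That is, the class of such ReLU networks of hidden width n + m + 1 is dense in L^p(ℝⁿ; ℝᵐ). -/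
open MeasureTheory

/-- An affine layer `v ↦ A v + b`. -/
noncomputable def affineLayer {p q : ℕ} (A : Matrix (Fin p) (Fin q) ℝ)
    (b : Fin p → ℝ) (v : Fin q → ℝ) : Fin p → ℝ :=
  A.mulVec v + b

/-- Componentwise ReLU activation `ρ(x) = max(x, 0)`. -/
def reluVec {p : ℕ} (v : Fin p → ℝ) : Fin p → ℝ :=
  fun i => max (v i) 0

/-- A feedforward ReLU network `A_{k+1} ∘ σ ∘ A_k ∘ σ ∘ ⋯ ∘ σ ∘ A₁` with
input dimension `n`, output dimension `m`, `k = j + 1 ≥ 1` hidden layers each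
of width `n + m + 1` (first affine map `A₁ : ℝⁿ → ℝ^{n+m+1}`, middle affine
maps `A₂, …, A_k` of width `n+m+1`, output affine map
`A_{k+1} : ℝ^{n+m+1} → ℝᵐ`), ReLU activation in the hidden layers and
identity activation in the output layer. -/
noncomputable def reluNetwork (n m j : ℕ)
    (A₁ : Matrix (Fin (n + m + 1)) (Fin n) ℝ) (b₁ : Fin (n + m + 1) → ℝ)
    (As : Fin j → Matrix (Fin (n + m + 1)) (Fin (n + m + 1)) ℝ)
    (bs : Fin j → Fin (n + m + 1) → ℝ)
    (Aout : Matrix (Fin m) (Fin (n + m + 1)) ℝ) (bout : Fin m → ℝ)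
    (x : EuclideanSpace ℝ (Fin n)) : EuclideanSpace ℝ (Fin m) :=
  WithLp.toLp 2 (affineLayer Aout bout
    ((List.finRange j).foldl (fun v i => reluVec (affineLayer (As i) (bs i) v))
      (reluVec (affineLayer A₁ b₁ x))))

/-!
Continuous compactly supported functions are dense in `L^p`, and such a function is the `L^p`
limit of its step functions on finer and finer grids of half-open cubes. The indicator of a box
is the dominated pointwise limit, as `η → 0⁺`, of the trapezoid bump `max (η - D) 0 / η`, where
`D` is the maximum of `0` and `2n` affine functions. A ReLU network of width `n + m + 1` evaluates
any finite sum of such bumps: `n` neurons carry the (shifted) input, `m` neurons accumulate the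
output, and one scratch neuron computes each `D` through updates `s ↦ max (s + g) 0`, turns it
into the bump and hands it to the accumulators.
-/

open Filter Topology Set Metric Matrix
open scoped ENNReal

noncomputable section

section DominatedConvergence

variable {α E ι : Type*} [MeasurableSpace α] {μ : Measure α} [NormedAddCommGroup E]
  {l : Filter ι} [l.IsCountablyGenerated] {p : ℝ≥0∞}

theorem tendsto_eLpNorm_of_dominated (hp0 : p ≠ 0) (hp : p ≠ ∞) {G : ι → α → E}
    (bound : α → ℝ) (hG : ∀ᶠ i in l, AEStronglyMeasurable (G i) μ)
    (hbound : MemLp bound p μ) (h_le : ∀ᶠ i in l, ∀ᵐ x ∂μ, ‖G i x‖ ≤ bound x)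
    (h_lim : ∀ᵐ x ∂μ, Tendsto (G · x) l (𝓝 0)) :
    Tendsto (fun i => eLpNorm (G i) p μ) l (𝓝 0) := by
  have hp_pos : 0 < p.toReal := ENNReal.toReal_pos hp0 hp
  simp_rw [eLpNorm_eq_lintegral_rpow_enorm_toReal hp0 hp]
  have h_int : Tendsto (fun i => ∫⁻ x, ‖G i x‖ₑ ^ p.toReal ∂μ) l (𝓝 0) := by
    simpa using tendsto_lintegral_filter_of_dominated_convergence' (μ := μ)
      (f := fun _ => 0) (fun x => ‖bound x‖ₑ ^ p.toReal)
      (hG.mono fun i hi => hi.enorm.pow_const _)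
      (h_le.mono fun i hi => hi.mono fun x hx => ENNReal.rpow_le_rpow
        (enorm_le_iff_norm_le.2 (hx.trans (le_abs_self _))) hp_pos.le)
      (lintegral_rpow_enorm_lt_top_of_eLpNorm_lt_top hp0 hp hbound.2).ne
      (h_lim.mono fun x hx => by
        simpa [ENNReal.zero_rpow_of_pos hp_pos] using
          (tendsto_zero_iff_enorm_tendsto_zero.1 hx).ennrpow_const p.toReal)
  simpa [ENNReal.zero_rpow_of_pos (inv_pos.2 hp_pos)] using
    h_int.ennrpow_const p.toReal⁻¹

end DominatedConvergence

section BoxBump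

variable {ι : Type*} [Fintype ι]

def posMaxAffine (L : List ((ι → ℝ) × ℝ)) (y : ι → ℝ) : ℝ :=
  (L.map fun ℓ => ℓ.1 ⬝ᵥ y + ℓ.2).foldr max 0

theorem posMaxAffine_le_iff {L : List ((ι → ℝ) × ℝ)} {y : ι → ℝ} {t : ℝ} :
    posMaxAffine L y ≤ t ↔ 0 ≤ t ∧ ∀ ℓ ∈ L, ℓ.1 ⬝ᵥ y + ℓ.2 ≤ t := by
  induction L with
  | nil => simp [posMaxAffine]
  | cons ℓ L ih =>
    rw [List.forall_mem_cons, ← and_assoc, and_right_comm, ← ih]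
    simp only [posMaxAffine, List.map_cons, List.foldr_cons, max_le_iff]
    exact and_comm

theorem continuous_posMaxAffine (L : List ((ι → ℝ) × ℝ)) : Continuous (posMaxAffine L) := by
  induction L with
  | nil => exact continuous_const
  | cons ℓ L ih => exact ((continuous_const.dotProduct continuous_id).add continuous_const).max ih

theorem posMaxAffine_nonneg (L : List ((ι → ℝ) × ℝ)) (y : ι → ℝ) : 0 ≤ posMaxAffine L y :=
  (posMaxAffine_le_iff.1 le_rfl).1

variable [DecidableEq ι]

def boxConstraints (lo hi : ι → ℝ) (η : ℝ) : List ((ι → ℝ) × ℝ) :=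
  (Finset.univ : Finset ι).toList.flatMap fun i =>
    [(-Pi.single i 1, lo i), (Pi.single i 1, η - hi i)]

theorem posMaxAffine_boxConstraints_le_iff {lo hi y : ι → ℝ} {η t : ℝ} :
    posMaxAffine (boxConstraints lo hi η) y ≤ t ↔
      0 ≤ t ∧ ∀ i, lo i - y i ≤ t ∧ y i - hi i + η ≤ t := by
  simp only [posMaxAffine_le_iff, boxConstraints, List.mem_flatMap, Finset.mem_toList,
    Finset.mem_univ, true_and, List.mem_cons, List.not_mem_nil, or_false, forall_exists_index,
    or_imp, forall_and, @forall_comm ((ι → ℝ) × ℝ) ι, forall_eq, neg_dotProduct,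
    single_one_dotProduct, neg_add_eq_sub, add_sub_assoc', add_sub_right_comm]

/-- The trapezoid bump: `1` on `∏ [lo i, hi i - η]` and `0` off `∏ (lo i - η, hi i)`. -/
def boxBump (lo hi : ι → ℝ) (η : ℝ) (y : ι → ℝ) : ℝ :=
  max (η - posMaxAffine (boxConstraints lo hi η) y) 0 / η

variable {lo hi y : ι → ℝ} {η : ℝ}

theorem boxBump_nonneg (hη : 0 < η) : 0 ≤ boxBump lo hi η y :=
  div_nonneg (le_max_right _ _) hη.le

theorem boxBump_le_one (hη : 0 < η) : boxBump lo hi η y ≤ 1 := by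
  have := posMaxAffine_nonneg (boxConstraints lo hi η) y
  rw [boxBump, div_le_one hη]
  exact max_le (by linarith) hη.le

theorem abs_boxBump_mul_le (hη : 0 < η) (c : ℝ) : |boxBump lo hi η y * c| ≤ |c| := by
  rw [abs_mul, abs_of_nonneg (boxBump_nonneg hη)]
  exact mul_le_of_le_one_left (abs_nonneg c) (boxBump_le_one hη)

theorem boxBump_eq_one (hη : 0 < η) (h : ∀ i, lo i ≤ y i ∧ y i ≤ hi i - η) :
    boxBump lo hi η y = 1 := by
  have : posMaxAffine (boxConstraints lo hi η) y = 0 :=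
    (posMaxAffine_boxConstraints_le_iff.2 ⟨le_rfl, fun i =>
      ⟨by linarith [h i], by linarith [h i]⟩⟩).antisymm (posMaxAffine_nonneg _ _)
  rw [boxBump, this, sub_zero, max_eq_left hη.le, div_self hη.ne']

theorem boxBump_eq_zero (h : ∃ i, y i ≤ lo i - η ∨ hi i ≤ y i) :
    boxBump lo hi η y = 0 := by
  obtain ⟨i, hyi⟩ := h
  have hD := (posMaxAffine_boxConstraints_le_iff (lo := lo) (hi := hi) (y := y) (η := η)).1 le_rfl
  rw [boxBump, max_eq_right (by rcases hyi with hyi | hyi <;> linarith [(hD.2 i).1, (hD.2 i).2]),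
    zero_div]

theorem boxBump_shift_relu {C : ℝ} (hC : ∀ i, η - C ≤ lo i) (x : ι → ℝ) :
    boxBump (fun i => lo i + C) (fun i => hi i + C) η (fun i => max (x i + C) 0)
      = boxBump lo hi η x := by
  by_cases hx : ∃ i, x i < -C
  · obtain ⟨i, hxi⟩ := hx
    have hrelu : max (x i + C) 0 = 0 := max_eq_right (by linarith)
    rw [boxBump_eq_zero (lo := lo) ⟨i, Or.inl (by linarith [hC i])⟩,
      boxBump_eq_zero ⟨i, Or.inl (by rw [hrelu]; linarith [hC i])⟩]
  · simp only [not_exists, not_lt] at hx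
    have hrelu : (fun i => max (x i + C) 0) = fun i => x i + C :=
      funext fun i => max_eq_left (by linarith [hx i])
    rw [hrelu, boxBump, boxBump]
    congr 3
    refine eq_of_forall_ge_iff fun t => ?_
    simp only [posMaxAffine_boxConstraints_le_iff, add_sub_add_right_eq_sub]

theorem continuous_boxBump (lo hi : ι → ℝ) (η : ℝ) : Continuous (boxBump lo hi η) :=
  ((continuous_const.sub (continuous_posMaxAffine _)).max continuous_const).div_const η

theorem eventually_boxBump_eq_indicator (lo hi y : ι → ℝ) :
    ∀ᶠ η in 𝓝[>] 0, boxBump lo hi η y = (univ.pi fun i => Ico (lo i) (hi i)).indicator 1 y := by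
  by_cases hy : y ∈ univ.pi fun i => Ico (lo i) (hi i)
  · have hy' : ∀ i, lo i ≤ y i ∧ y i < hi i := fun i => hy i trivial
    rw [indicator_of_mem hy, Pi.one_apply]
    filter_upwards [self_mem_nhdsWithin, eventually_nhdsWithin_of_eventually_nhds
      (eventually_all.2 fun i => eventually_lt_nhds (sub_pos.2 (hy' i).2))] with η hη hlt
    exact boxBump_eq_one hη fun i => ⟨(hy' i).1, by linarith [hlt i]⟩
  · rw [indicator_of_notMem hy]
    obtain ⟨i, hyi⟩ : ∃ i, y i < lo i ∨ hi i ≤ y i := by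
      by_contra! h
      exact hy fun i _ => h i
    rcases hyi with hyi | hyi
    · filter_upwards [eventually_nhdsWithin_of_eventually_nhds
        (eventually_le_nhds (sub_pos.2 hyi))] with η hη
      exact boxBump_eq_zero ⟨i, Or.inl (by linarith)⟩
    · exact Eventually.of_forall fun η => boxBump_eq_zero ⟨i, Or.inr hyi⟩

end BoxBump

structure WeightedBox (ι E : Type*) where
  lo : ι → ℝ
  hi : ι → ℝ
  coeff : E

namespace WeightedBox

variable {ι E : Type*}

def box (b : WeightedBox ι E) : Set (ι → ℝ) :=
  univ.pi fun i => Ico (b.lo i) (b.hi i)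

variable [NormedAddCommGroup E] [NormedSpace ℝ E]

def step (b : WeightedBox ι E) (x : ι → ℝ) : E :=
  b.box.indicator (1 : (ι → ℝ) → ℝ) x • b.coeff

theorem aestronglyMeasurable_step [Countable ι] (b : WeightedBox ι E) {μ : Measure (ι → ℝ)} :
    AEStronglyMeasurable b.step μ :=
  ((stronglyMeasurable_one.indicator
    (MeasurableSet.univ_pi fun _ => measurableSet_Ico)).smul_const b.coeff).aestronglyMeasurable

variable [Fintype ι] [DecidableEq ι]

def bump (b : WeightedBox ι E) (η : ℝ) (x : ι → ℝ) : E :=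
  boxBump b.lo b.hi η x • b.coeff

theorem continuous_bump (b : WeightedBox ι E) (η : ℝ) : Continuous (b.bump η) :=
  (continuous_boxBump _ _ η).smul continuous_const

theorem tendsto_eLpNorm_bump_sub_step (b : WeightedBox ι E) {p : ℝ≥0∞} (hp0 : p ≠ 0)
    (hp : p ≠ ∞) :
    Tendsto (fun η => eLpNorm (b.bump η - b.step) p volume) (𝓝[>] 0) (𝓝 0) := by
  refine tendsto_eLpNorm_of_dominated hp0 hp
    ((Icc (b.lo - 1) b.hi).indicator fun _ => ‖b.coeff‖)
    (Eventually.of_forall fun η => (b.continuous_bump η).aestronglyMeasurable.sub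
      b.aestronglyMeasurable_step)
    (memLp_indicator_const p measurableSet_Icc _ (Or.inr isCompact_Icc.measure_lt_top.ne)) ?_
    (Eventually.of_forall fun x => tendsto_const_nhds.congr'
      ((eventually_boxBump_eq_indicator b.lo b.hi x).mono fun η hη => by
        simp [bump, step, box, hη]))
  filter_upwards [Ioo_mem_nhdsGT zero_lt_one] with η ⟨hη0, hη1⟩
  refine Eventually.of_forall fun x => ?_
  by_cases hx : x ∈ Icc (b.lo - 1) b.hi
  · rw [indicator_of_mem hx, Pi.sub_apply, bump, step, ← sub_smul, norm_smul]
    exact mul_le_of_le_one_left (norm_nonneg _) (abs_sub_le_of_nonneg_of_le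
      (boxBump_nonneg hη0) (boxBump_le_one hη0) (indicator_nonneg (fun _ _ => zero_le_one) x)
      (indicator_le_self' (fun _ _ => zero_le_one) x))
  · obtain ⟨i, hxi⟩ : ∃ i, x i < b.lo i - 1 ∨ b.hi i < x i := by
      by_contra! h
      exact hx ⟨fun i => (h i).1, fun i => (h i).2⟩
    have hbump : boxBump b.lo b.hi η x = 0 :=
      boxBump_eq_zero ⟨i, by rcases hxi with h | h <;> [left; right] <;> linarith⟩
    have hstep : x ∉ b.box := fun hxb => by
      have := hxb i trivial
      rcases hxi with h | h <;> linarith [this.1, this.2]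
    simp [indicator_of_notMem hx, bump, step, hbump, hstep]

end WeightedBox

section BoxSums

variable {ι E : Type*} [NormedAddCommGroup E] [NormedSpace ℝ E]

def stepSum (L : List (WeightedBox ι E)) : (ι → ℝ) → E :=
  (L.map WeightedBox.step).sum

theorem aestronglyMeasurable_stepSum [Countable ι] {L : List (WeightedBox ι E)}
    {μ : Measure (ι → ℝ)} :
    AEStronglyMeasurable (stepSum L) μ := by
  induction L with
  | nil => exact aestronglyMeasurable_zero
  | cons b L ih => exact b.aestronglyMeasurable_step.add ih

variable [Fintype ι] [DecidableEq ι]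

def bumpSum (η : ℝ) (L : List (WeightedBox ι E)) : (ι → ℝ) → E :=
  (L.map (·.bump η)).sum

variable {L : List (WeightedBox ι E)}

theorem bumpSum_cons (η : ℝ) (b : WeightedBox ι E) (L : List (WeightedBox ι E)) :
    bumpSum η (b :: L) = b.bump η + bumpSum η L := by
  rw [bumpSum, List.map_cons, List.sum_cons, bumpSum]

theorem continuous_bumpSum (η : ℝ) : Continuous (bumpSum η L) := by
  induction L with
  | nil => exact continuous_zero
  | cons b L ih => exact (b.continuous_bump η).add ih

theorem tendsto_eLpNorm_bumpSum_sub_stepSum {p : ℝ≥0∞} (hp : 1 ≤ p) (hp' : p ≠ ∞)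
    (L : List (WeightedBox ι E)) :
    Tendsto (fun η => eLpNorm (bumpSum η L - stepSum L) p volume) (𝓝[>] 0) (𝓝 0) := by
  induction L with
  | nil => simp [bumpSum, stepSum]
  | cons b L ih =>
    have hsum := (b.tendsto_eLpNorm_bump_sub_step (one_pos.trans_le hp).ne' hp').add ih
    rw [add_zero] at hsum
    refine tendsto_of_tendsto_of_tendsto_of_le_of_le tendsto_const_nhds hsum
      (fun _ => zero_le) fun η => ?_
    have hsplit : bumpSum η (b :: L) - stepSum (b :: L)
        = (b.bump η - b.step) + (bumpSum η L - stepSum L) := by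
      simp only [bumpSum, stepSum, List.map_cons, List.sum_cons]
      abel
    rw [hsplit]
    exact eLpNorm_add_le ((b.continuous_bump η).aestronglyMeasurable.sub
      b.aestronglyMeasurable_step)
      ((continuous_bumpSum η).aestronglyMeasurable.sub aestronglyMeasurable_stepSum) hp

end BoxSums

section Grid

variable {ι E : Type*} {h : ℝ}

def gridIndex (h : ℝ) (x : ι → ℝ) : ι → ℤ := fun i => ⌊x i / h⌋

def gridCenter (h : ℝ) (t : ι → ℤ) : ι → ℝ := fun i => (t i + 1 / 2) * h

def gridBox (h : ℝ) (t : ι → ℤ) (c : E) : WeightedBox ι E :=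
  ⟨fun i => t i * h, fun i => (t i + 1) * h, c⟩

theorem mem_gridBox_box_iff (hh : 0 < h) {t : ι → ℤ} {c : E} {x : ι → ℝ} :
    x ∈ (gridBox h t c).box ↔ gridIndex h x = t := by
  simp [WeightedBox.box, gridBox, gridIndex, funext_iff, Int.floor_eq_iff, le_div_iff₀ hh,
    div_lt_iff₀ hh]

theorem dist_gridCenter_gridIndex_le [Fintype ι] (hh : 0 < h) (x : ι → ℝ) :
    dist (gridCenter h (gridIndex h x)) x ≤ h := by
  refine (dist_pi_le_iff hh.le).2 fun i => ?_
  have h1 := Int.floor_le (x i / h)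
  have h2 := Int.lt_floor_add_one (x i / h)
  rw [le_div_iff₀ hh] at h1
  rw [div_lt_iff₀ hh] at h2
  simp only [gridCenter, gridIndex, Real.dist_eq, abs_le]
  constructor <;> nlinarith

theorem measurable_gridCenter_gridIndex (h : ℝ) :
    Measurable fun x : ι → ℝ => gridCenter h (gridIndex h x) := by
  unfold gridCenter gridIndex
  fun_prop

variable [NormedAddCommGroup E]

theorem exists_finset_gridCenter [Fintype ι] (hh : 0 < h) {g : (ι → ℝ) → E}
    (hgs : HasCompactSupport g) :
    ∃ T : Finset (ι → ℤ), ∀ t, g (gridCenter h t) ≠ 0 → t ∈ T := by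
  classical
  obtain ⟨r, hr⟩ := hgs.isBounded.subset_closedBall 0
  refine ⟨Finset.Icc (fun _ => -(⌈r / h⌉ + 1)) (fun _ => ⌈r / h⌉ + 1), fun t ht => ?_⟩
  have hc : ‖gridCenter h t‖ ≤ r := mem_closedBall_zero_iff.1 (hr (subset_tsupport _ ht))
  have hN := Int.le_ceil (r / h)
  rw [Finset.mem_Icc]
  constructor <;> intro i <;> have hi := abs_le.1 ((norm_le_pi_norm _ i).trans hc) <;>
    simp only [gridCenter] at hi
  · have : -(r / h) ≤ t i + 1 / 2 := by rw [neg_le, le_div_iff₀ hh]; linarith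
    have : (-(⌈r / h⌉ + 1) : ℝ) ≤ t i := by linarith
    exact_mod_cast this
  · have : t i + 1 / 2 ≤ r / h := by rw [le_div_iff₀ hh]; linarith
    have : (t i : ℝ) ≤ ⌈r / h⌉ + 1 := by linarith
    exact_mod_cast this

theorem tendsto_eLpNorm_sub_comp_gridCenter [Fintype ι] {g : (ι → ℝ) → E} {p : ℝ≥0∞}
    (hg : Continuous g) (hgs : HasCompactSupport g) (hp0 : p ≠ 0) (hp : p ≠ ∞) :
    Tendsto (fun h => eLpNorm (fun x => g x - g (gridCenter h (gridIndex h x))) p volume)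
      (𝓝[>] 0) (𝓝 0) := by
  obtain ⟨r, hr⟩ := hgs.isBounded.subset_closedBall 0
  obtain ⟨M, hM⟩ := hg.bounded_above_of_compact_support hgs
  have hzero (y : ι → ℝ) (hy : r < ‖y‖) : g y = 0 :=
    image_eq_zero_of_notMem_tsupport fun hy' =>
      (mem_closedBall_zero_iff.1 (hr hy')).not_gt hy
  refine tendsto_eLpNorm_of_dominated hp0 hp ((closedBall 0 (r + 1)).indicator fun _ => M + M)
    (Eventually.of_forall fun h => hg.aestronglyMeasurable.sub
      (hg.comp_aestronglyMeasurable (measurable_gridCenter_gridIndex h).aestronglyMeasurable))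
    (memLp_indicator_const p measurableSet_closedBall _ (Or.inr measure_closedBall_lt_top.ne))
    ?_ (Eventually.of_forall fun x => ?_)
  · filter_upwards [Ioo_mem_nhdsGT one_pos] with h ⟨hh0, hh1⟩
    refine Eventually.of_forall fun x => ?_
    by_cases hx : x ∈ closedBall 0 (r + 1)
    · rw [indicator_of_mem hx]
      exact (norm_sub_le _ _).trans (add_le_add (hM _) (hM _))
    · have hx' : r + 1 < ‖x‖ := by simpa using hx
      have hc := dist_gridCenter_gridIndex_le hh0 x
      have hc' : r < ‖gridCenter h (gridIndex h x)‖ := by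
        have := norm_sub_norm_le x (gridCenter h (gridIndex h x))
        rw [← dist_eq_norm, dist_comm] at this
        linarith
      simp [indicator_of_notMem hx, hzero x (by linarith), hzero _ hc']
  · have hc : Tendsto (fun h => gridCenter h (gridIndex h x)) (𝓝[>] 0) (𝓝 x) :=
      tendsto_iff_dist_tendsto_zero.2 (squeeze_zero' (Eventually.of_forall fun _ => dist_nonneg)
        (eventually_nhdsWithin_of_forall fun h hh => dist_gridCenter_gridIndex_le hh x)
        (tendsto_nhdsWithin_of_tendsto_nhds tendsto_id))
    simpa using (tendsto_const_nhds (x := g x)).sub ((hg.tendsto x).comp hc)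

variable [NormedSpace ℝ E]

theorem stepSum_gridBoxes (hh : 0 < h) {g : (ι → ℝ) → E} {T : Finset (ι → ℤ)}
    (hT : ∀ t, g (gridCenter h t) ≠ 0 → t ∈ T) (x : ι → ℝ) :
    stepSum (T.toList.map fun t => gridBox h t (g (gridCenter h t))) x
      = g (gridCenter h (gridIndex h x)) := by
  classical
  have hstep (t : ι → ℤ) : (gridBox h t (g (gridCenter h t))).step x
      = if gridIndex h x = t then g (gridCenter h t) else 0 := by
    unfold WeightedBox.step
    by_cases hx : gridIndex h x = t
    · rw [if_pos hx, indicator_of_mem ((mem_gridBox_box_iff hh).2 hx), Pi.one_apply, one_smul]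
      rfl
    · rw [if_neg hx, indicator_of_notMem (mt (mem_gridBox_box_iff hh).1 hx), zero_smul]
  simp only [stepSum, Pi.list_sum_apply, List.map_map, Function.comp_def, hstep,
    Finset.sum_map_toList, Finset.sum_ite_eq]
  split_ifs with hx
  · rfl
  · exact (not_not.1 (mt (hT _) hx)).symm

theorem exists_stepSum_eLpNorm_sub_le [Fintype ι] {g : (ι → ℝ) → E} {p : ℝ≥0∞}
    (hg : Continuous g) (hgs : HasCompactSupport g) (hp0 : p ≠ 0) (hp : p ≠ ∞) {δ : ℝ≥0∞}
    (hδ : δ ≠ 0) :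
    ∃ L : List (WeightedBox ι E), eLpNorm (g - stepSum L) p volume ≤ δ := by
  obtain ⟨h, hδh, hh⟩ := (((tendsto_eLpNorm_sub_comp_gridCenter hg hgs hp0 hp).eventually
    (eventually_le_nhds (pos_iff_ne_zero.2 hδ))).and self_mem_nhdsWithin).exists
  obtain ⟨T, hT⟩ := exists_finset_gridCenter hh hgs
  refine ⟨T.toList.map fun t => gridBox h t (g (gridCenter h t)), ?_⟩
  have hstep : g - stepSum (T.toList.map fun t => gridBox h t (g (gridCenter h t)))
      = fun x => g x - g (gridCenter h (gridIndex h x)) :=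
    funext fun x => by rw [Pi.sub_apply, stepSum_gridBoxes hh hT]
  rwa [hstep]

end Grid

theorem exists_bumpSum_eLpNorm_sub_le {ι E : Type*} [Fintype ι] [DecidableEq ι]
    [NormedAddCommGroup E] [NormedSpace ℝ E] {p : ℝ≥0∞} (hp : 1 ≤ p) (hp' : p ≠ ∞)
    {f : (ι → ℝ) → E} (hf : MemLp f p volume) {ε : ℝ≥0∞} (hε : ε ≠ 0) :
    ∃ (η : ℝ) (L : List (WeightedBox ι E)), 0 < η ∧ eLpNorm (f - bumpSum η L) p volume ≤ ε := by
  have hε3 : ε / 3 ≠ 0 := by simp [hε]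
  obtain ⟨g, hgs, hfg, hg, -⟩ := hf.exists_hasCompactSupport_eLpNorm_sub_le hp' hε3
  obtain ⟨L, hgL⟩ :=
    exists_stepSum_eLpNorm_sub_le hg hgs (zero_lt_one.trans_le hp).ne' hp' hε3
  obtain ⟨η, hLη, hη⟩ := (((tendsto_eLpNorm_bumpSum_sub_stepSum hp hp' L).eventually
    (eventually_le_nhds (pos_iff_ne_zero.2 hε3))).and self_mem_nhdsWithin).exists
  refine ⟨η, L, hη, ?_⟩
  have hsplit : f - bumpSum η L = (f - g) + (g - stepSum L) - (bumpSum η L - stepSum L) := by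
    abel
  have hfg_meas := hf.1.sub hg.aestronglyMeasurable
  have hgL_meas : AEStronglyMeasurable (g - stepSum L) volume :=
    hg.aestronglyMeasurable.sub aestronglyMeasurable_stepSum
  calc eLpNorm (f - bumpSum η L) p volume
      ≤ eLpNorm (f - g) p volume + eLpNorm (g - stepSum L) p volume
          + eLpNorm (bumpSum η L - stepSum L) p volume := by
        rw [hsplit]
        exact (eLpNorm_sub_le (hfg_meas.add hgL_meas)
          ((continuous_bumpSum η).aestronglyMeasurable.sub aestronglyMeasurable_stepSum) hp).trans
          (add_le_add_left (eLpNorm_add_le hfg_meas hgL_meas hp) _)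
    _ ≤ ε / 3 + ε / 3 + ε / 3 := by gcongr
    _ = ε := ENNReal.add_thirds ε

section Telescoping

/-- A neuron with update `s ↦ max (s + g) 0` cannot take maxima directly, but fed the
consecutive differences of `a₁, …, aᵣ` it ends at `max 0 a₁ … aᵣ`. -/
def consecDiffs {α : Type*} [Sub α] : List α → List α
  | [] => []
  | [a] => [a]
  | a :: b :: l => (a - b) :: consecDiffs (b :: l)

theorem map_consecDiffs {α β : Type*} [Sub α] [Sub β] {f : α → β}
    (hf : ∀ a b, f (a - b) = f a - f b) (L : List α) :
    (consecDiffs L).map f = consecDiffs (L.map f) := by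
  induction L using consecDiffs.induct with
  | case1 | case2 => rfl
  | case3 a b l ih => simp [consecDiffs, hf, ih]

variable {α : Type*} [AddCommGroup α] [LinearOrder α] [IsOrderedAddMonoid α]

theorem foldl_max_add_consecDiffs_cons (a : α) (l : List α) {s : α} (hs : 0 ≤ s) :
    (consecDiffs (a :: l)).foldl (fun s g => max (s + g) 0) s
      = max (s + a) ((a :: l).foldr max 0) := by
  induction l generalizing a s with
  | nil =>
    have has : a ≤ s + a := le_add_of_nonneg_left hs
    rw [consecDiffs, List.foldl_cons, List.foldl_nil, List.foldr_cons, List.foldr_nil,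
      ← max_assoc, max_eq_left has]
  | cons b l ih =>
    have has : a ≤ s + a := le_add_of_nonneg_left hs
    rw [consecDiffs, List.foldl_cons, ih b (le_max_right _ _), ← max_add_add_right, zero_add,
      add_assoc, sub_add_cancel]
    simp only [List.foldr_cons]
    rw [max_assoc, ← max_assoc b b, max_self, ← max_assoc (s + a) a, max_eq_left has]

theorem foldl_max_add_consecDiffs (L : List α) :
    (consecDiffs L).foldl (fun s g => max (s + g) 0) 0 = L.foldr max 0 := by
  cases L with
  | nil => rfl
  | cons a l =>
    rw [foldl_max_add_consecDiffs_cons a l le_rfl, zero_add, List.foldr_cons, ← max_assoc,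
      max_self]

end Telescoping

namespace ReLURegisters

variable {n m : ℕ}

/-- The `n + m + 1` neurons of a hidden layer are used as `n` input registers, `m` accumulators
and one scratch register. -/
def registerEquiv (n m : ℕ) : Fin n ⊕ Fin m ⊕ Fin 1 ≃ Fin (n + m + 1) :=
  (Equiv.sumCongr (Equiv.refl (Fin n)) finSumFinEquiv).trans finSumFinEquiv

def pack {α : Type*} (z : Fin n → α) (a : Fin m → α) (s : α) : Fin (n + m + 1) → α :=
  Sum.elim z (Sum.elim a fun _ => s) ∘ (registerEquiv n m).symm

theorem pack_map {α β : Type*} (f : α → β) (z : Fin n → α) (a : Fin m → α) (s : α) :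
    (fun i => f (pack z a s i)) = pack (fun k => f (z k)) (fun k => f (a k)) (f s) := by
  funext i
  simp only [pack, Function.comp_apply]
  rcases (registerEquiv n m).symm i with k | k | k <;> rfl

theorem pack_map₂ {α β γ : Type*} (f : α → β → γ) (z : Fin n → α) (a : Fin m → α) (s : α)
    (z' : Fin n → β) (a' : Fin m → β) (s' : β) :
    (fun i => f (pack z a s i) (pack z' a' s' i))
      = pack (fun k => f (z k) (z' k)) (fun k => f (a k) (a' k)) (f s s') := by
  funext i
  simp only [pack, Function.comp_apply]
  rcases (registerEquiv n m).symm i with k | k | k <;> rfl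

theorem pack_add {α : Type*} [Add α] (z z' : Fin n → α) (a a' : Fin m → α) (s s' : α) :
    pack z a s + pack z' a' s' = pack (z + z') (a + a') (s + s') :=
  pack_map₂ (· + ·) z a s z' a' s'

theorem reluVec_pack (z : Fin n → ℝ) (a : Fin m → ℝ) (s : ℝ) :
    reluVec (pack z a s) = pack (fun k => max (z k) 0) (fun k => max (a k) 0) (max s 0) :=
  pack_map (max · 0) z a s

theorem pack_dotProduct_pack {R : Type*} [NonUnitalNonAssocSemiring R] (z z' : Fin n → R)
    (a a' : Fin m → R) (s s' : R) :
    pack z a s ⬝ᵥ pack z' a' s' = z ⬝ᵥ z' + a ⬝ᵥ a' + s * s' := by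
  rw [pack, pack, dotProduct_comp_equiv_symm, Function.comp_assoc, Equiv.symm_comp_self,
    Function.comp_id, sumElim_dotProduct_sumElim, sumElim_dotProduct_sumElim, add_assoc]
  simp [dotProduct]

theorem mulVec_pack {R : Type*} [NonUnitalNonAssocSemiring R] {q : ℕ} (Z : Fin n → Fin q → R)
    (A : Fin m → Fin q → R) (S : Fin q → R) (v : Fin q → R) :
    of (pack Z A S) *ᵥ v = pack (fun k => Z k ⬝ᵥ v) (fun k => A k ⬝ᵥ v) (S ⬝ᵥ v) :=
  pack_map (· ⬝ᵥ v) Z A S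

abbrev Layer (d : ℕ) := Matrix (Fin d) (Fin d) ℝ × (Fin d → ℝ)

def reluLayer {d : ℕ} (l : Layer d) (v : Fin d → ℝ) : Fin d → ℝ :=
  reluVec (affineLayer l.1 l.2 v)

def runLayers {d : ℕ} (L : List (Layer d)) (v : Fin d → ℝ) : Fin d → ℝ :=
  L.foldl (fun v l => reluLayer l v) v

theorem runLayers_append {d : ℕ} (L L' : List (Layer d)) (v : Fin d → ℝ) :
    runLayers (L ++ L') v = runLayers L' (runLayers L v) :=
  List.foldl_append

theorem reluNetwork_eq_runLayers (L : List (Layer (n + m + 1)))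
    (A₁ : Matrix (Fin (n + m + 1)) (Fin n) ℝ) (b₁ : Fin (n + m + 1) → ℝ)
    (Aout : Matrix (Fin m) (Fin (n + m + 1)) ℝ) (bout : Fin m → ℝ)
    (x : EuclideanSpace ℝ (Fin n)) :
    reluNetwork n m L.length A₁ b₁ (fun i => (L.get i).1) (fun i => (L.get i).2) Aout bout x
      = WithLp.toLp 2
          (affineLayer Aout bout (runLayers L (reluVec (affineLayer A₁ b₁ x.ofLp)))) := by
  rw [reluNetwork, runLayers]
  conv_rhs => rw [← L.map_get_finRange, List.foldl_map]
  rfl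

def registerLayer (γ : Fin m → ℝ) (w : Fin n → ℝ) (ρ θ : ℝ) : Layer (n + m + 1) :=
  (of (pack (fun k => pack (Pi.single k 1) 0 0) (fun k => pack 0 (Pi.single k 1) (γ k))
    (pack w 0 ρ)), pack 0 0 θ)

theorem reluLayer_registerLayer {z : Fin n → ℝ} (hz : ∀ i, 0 ≤ z i) (a : Fin m → ℝ) (s : ℝ)
    (γ : Fin m → ℝ) (w : Fin n → ℝ) (ρ θ : ℝ) :
    reluLayer (registerLayer γ w ρ θ) (pack z a s)
      = pack z (fun k => max (a k + γ k * s) 0) (max (ρ * s + (w ⬝ᵥ z + θ)) 0) := by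
  simp only [reluLayer, registerLayer, affineLayer, mulVec_pack, pack_add, reluVec_pack,
    pack_dotProduct_pack]
  congr 1
  · funext k
    simp [hz k]
  · funext k
    simp
  · rw [zero_dotProduct, add_zero]
    ring_nf

def scratchLayer (ℓ : (Fin n → ℝ) × ℝ) : Layer (n + m + 1) :=
  registerLayer 0 ℓ.1 1 ℓ.2

variable {z : Fin n → ℝ} {a : Fin m → ℝ}

theorem runLayers_map_scratchLayer (hz : ∀ i, 0 ≤ z i) (ha : ∀ k, 0 ≤ a k)
    (M : List ((Fin n → ℝ) × ℝ)) (s : ℝ) :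
    runLayers (M.map scratchLayer) (pack z a s)
      = pack z a (M.foldl (fun s ℓ => max (s + (ℓ.1 ⬝ᵥ z + ℓ.2)) 0) s) := by
  induction M generalizing s with
  | nil => rfl
  | cons ℓ M ih =>
    rw [List.map_cons, runLayers, List.foldl_cons, ← runLayers, scratchLayer,
      reluLayer_registerLayer hz]
    simpa [max_eq_left (ha _), one_mul] using ih _

theorem runLayers_scratchLayers (hz : ∀ i, 0 ≤ z i) (ha : ∀ k, 0 ≤ a k)
    (L : List ((Fin n → ℝ) × ℝ)) :
    runLayers ((consecDiffs L).map scratchLayer) (pack z a 0) = pack z a (posMaxAffine L z) := by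
  rw [runLayers_map_scratchLayer hz ha, posMaxAffine, ← foldl_max_add_consecDiffs,
    ← map_consecDiffs fun ℓ ℓ' => by simp only [Prod.fst_sub, Prod.snd_sub, sub_dotProduct]; abel,
    List.foldl_map]

def bumpLayers (η : ℝ) (lo hi : Fin n → ℝ) (c : Fin m → ℝ) : List (Layer (n + m + 1)) :=
  (consecDiffs (boxConstraints lo hi η)).map scratchLayer
    ++ [registerLayer 0 0 (-1) η, registerLayer (fun k => c k / η) 0 0 0]

theorem runLayers_bumpLayers {η : ℝ} (hη : 0 < η) (hz : ∀ i, 0 ≤ z i) (lo hi : Fin n → ℝ)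
    {c : Fin m → ℝ} (hca : ∀ k, |c k| ≤ a k) :
    runLayers (bumpLayers η lo hi c) (pack z a 0) = pack z (a + boxBump lo hi η z • c) 0 := by
  have ha : ∀ k, 0 ≤ a k := fun k => (abs_nonneg _).trans (hca k)
  rw [bumpLayers, runLayers_append, runLayers_scratchLayers hz ha]
  simp only [runLayers, List.foldl_cons, List.foldl_nil]
  rw [reluLayer_registerLayer hz, reluLayer_registerLayer hz]
  have hterm (k : Fin m) : c k / η * max (-1 * posMaxAffine (boxConstraints lo hi η) z
      + (0 ⬝ᵥ z + η)) 0 = boxBump lo hi η z * c k := by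
    rw [boxBump, zero_dotProduct, zero_add, neg_one_mul, neg_add_eq_sub]
    ring
  have hnonneg (k : Fin m) : 0 ≤ a k + boxBump lo hi η z * c k := by
    linarith [neg_abs_le (boxBump lo hi η z * c k),
      abs_boxBump_mul_le hη (c k) (lo := lo) (hi := hi) (y := z), hca k]
  congr 1
  · funext k
    rw [Pi.zero_apply, zero_mul, add_zero, max_eq_left (ha k), hterm, max_eq_left (hnonneg k)]
    rfl
  · simp

theorem runLayers_flatMap_bumpLayers {η : ℝ} (hη : 0 < η) (hz : ∀ i, 0 ≤ z i)
    (L : List (WeightedBox (Fin n) (Fin m → ℝ)))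
    (ha : ∀ k, (L.map fun b => |b.coeff k|).sum ≤ a k) :
    runLayers (L.flatMap fun b => bumpLayers η b.lo b.hi b.coeff) (pack z a 0)
      = pack z (a + bumpSum η L z) 0 := by
  induction L generalizing a with
  | nil => simp [runLayers, bumpSum]
  | cons b L ih =>
    have hrest (k : Fin m) : 0 ≤ (L.map fun b => |b.coeff k|).sum :=
      List.sum_nonneg fun x hx => by
        obtain ⟨b, -, rfl⟩ := List.mem_map.1 hx
        exact abs_nonneg _
    simp only [List.map_cons, List.sum_cons] at ha
    rw [List.flatMap_cons, runLayers_append,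
      runLayers_bumpLayers hη hz _ _ fun k => by linarith [ha k, hrest k], ih fun k => ?_]
    · simp [bumpSum, WeightedBox.bump, add_assoc, Pi.list_sum_apply]
    · rw [Pi.add_apply, Pi.smul_apply, smul_eq_mul]
      linarith [ha k, neg_abs_le (boxBump b.lo b.hi η z * b.coeff k),
        abs_boxBump_mul_le hη (b.coeff k) (lo := b.lo) (hi := b.hi) (y := z)]

theorem bumpSum_map_shift {η C : ℝ} {L : List (WeightedBox (Fin n) (EuclideanSpace ℝ (Fin m)))}
    (hC : ∀ b ∈ L, ∀ i, η - C ≤ b.lo i) (x : Fin n → ℝ) :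
    bumpSum η (L.map fun b => ⟨fun i => b.lo i + C, fun i => b.hi i + C, b.coeff.ofLp⟩)
        (fun i => max (x i + C) 0)
      = (bumpSum η L x).ofLp := by
  induction L with
  | nil => rfl
  | cons b L ih =>
    simp only [List.forall_mem_cons] at hC
    rw [List.map_cons, bumpSum_cons, bumpSum_cons, Pi.add_apply, Pi.add_apply, ih hC.2,
      WithLp.ofLp_add, WeightedBox.bump, WeightedBox.bump, boxBump_shift_relu hC.1,
      WithLp.ofLp_smul]

end ReLURegisters

open ReLURegisters in
theorem exists_reluNetwork_eq_bumpSum {η : ℝ} (hη : 0 < η)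
    (L : List (WeightedBox (Fin n) (EuclideanSpace ℝ (Fin m)))) :
    ∃ (j : ℕ) (A₁ : Matrix (Fin (n + m + 1)) (Fin n) ℝ) (b₁ : Fin (n + m + 1) → ℝ)
      (As : Fin j → Matrix (Fin (n + m + 1)) (Fin (n + m + 1)) ℝ)
      (bs : Fin j → Fin (n + m + 1) → ℝ)
      (Aout : Matrix (Fin m) (Fin (n + m + 1)) ℝ) (bout : Fin m → ℝ),
      ∀ x, reluNetwork n m j A₁ b₁ As bs Aout bout x = bumpSum η L x.ofLp := by
  obtain ⟨C, hC⟩ : ∃ C : ℝ, ∀ b ∈ L, ∀ i, η - C ≤ b.lo i := by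
    obtain ⟨M, hM⟩ := (L.finite_toSet.biUnion fun b _ => Set.finite_range b.lo).bddBelow
    exact ⟨η - M, fun b hb i => by simpa using hM (Set.mem_biUnion hb (Set.mem_range_self i))⟩
  -- Inputs are stored as `max (x + C) 0` and the accumulators start at `B = ∑ |coeff|`, so that
  -- ReLU acts as the identity on these registers; `C` is large enough for the clamping at `-C`
  -- not to affect any bump.
  set L' : List (WeightedBox (Fin n) (Fin m → ℝ)) :=
    L.map fun b => ⟨fun i => b.lo i + C, fun i => b.hi i + C, b.coeff.ofLp⟩
  set B : Fin m → ℝ := fun k => (L'.map fun b => |b.coeff k|).sum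
  set layers := L'.flatMap fun b => bumpLayers η b.lo b.hi b.coeff
  refine ⟨layers.length, of (pack (fun i => Pi.single i 1) 0 0), pack (fun _ => C) B 0,
    fun i => (layers.get i).1, fun i => (layers.get i).2, of fun k => pack 0 (Pi.single k 1) 0,
    -B, fun x => ?_⟩
  have hB (k : Fin m) : 0 ≤ B k := List.sum_nonneg fun y hy => by
    obtain ⟨b, -, rfl⟩ := List.mem_map.1 hy
    exact abs_nonneg _
  have hinput : reluVec (affineLayer (of (pack (fun i => Pi.single i 1) 0 0))
      (pack (fun _ => C) B 0) x.ofLp) = pack (fun i => max (x.ofLp i + C) 0) B 0 := by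
    simp [affineLayer, mulVec_pack, pack_add, reluVec_pack, max_eq_left (hB _)]
  rw [reluNetwork_eq_runLayers, hinput,
    runLayers_flatMap_bumpLayers hη (fun i => le_max_right _ _) L' fun k => le_rfl,
    bumpSum_map_shift hC]
  have hout (y : Fin m → ℝ) : affineLayer (of fun k => pack 0 (Pi.single k 1) 0) (-B)
      (pack (fun i => max (x.ofLp i + C) 0) (B + y) 0) = y := by
    funext k
    simp [affineLayer, mulVec, pack_dotProduct_pack]
  rw [hout, WithLp.toLp_ofLp]

end

/-- Theorem 3 of the paper (deep narrow ReLU networks are dense in `L^p`):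
for every `f* ∈ L^p(ℝⁿ; ℝᵐ)`, `p ∈ [1, ∞)`, and every `ε > 0`, there is a
feedforward ReLU network `g` with hidden layers of width exactly `n + m + 1`
and identity output activation such that `‖f* − g‖_{L^p} ≤ ε`. -/
theorem relu_network_dense_in_Lp
    (n m : ℕ) (p : ℝ) (hp : 1 ≤ p)
    (fstar : EuclideanSpace ℝ (Fin n) → EuclideanSpace ℝ (Fin m))
    (hf : MemLp fstar (ENNReal.ofReal p) volume)
    (ε : ℝ) (hε : 0 < ε) :
    ∃ (j : ℕ)
      (A₁ : Matrix (Fin (n + m + 1)) (Fin n) ℝ) (b₁ : Fin (n + m + 1) → ℝ)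
      (As : Fin j → Matrix (Fin (n + m + 1)) (Fin (n + m + 1)) ℝ)
      (bs : Fin j → Fin (n + m + 1) → ℝ)
      (Aout : Matrix (Fin m) (Fin (n + m + 1)) ℝ) (bout : Fin m → ℝ),
      eLpNorm (fun x => fstar x - reluNetwork n m j A₁ b₁ As bs Aout bout x)
          (ENNReal.ofReal p) volume ≤ ENNReal.ofReal ε := by
  have hf' : MemLp (fstar ∘ WithLp.toLp 2) (ENNReal.ofReal p) volume :=
    hf.comp_measurePreserving (PiLp.volume_preserving_toLp (Fin n))
  obtain ⟨η, L, hη, hL⟩ := exists_bumpSum_eLpNorm_sub_le (ENNReal.one_le_ofReal.2 hp)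
    ENNReal.ofReal_ne_top hf' (ENNReal.ofReal_pos.2 hε).ne'
  obtain ⟨j, A₁, b₁, As, bs, Aout, bout, hnet⟩ := exists_reluNetwork_eq_bumpSum hη L
  refine ⟨j, A₁, b₁, As, bs, Aout, bout, ?_⟩
  simp_rw [hnet]
  rwa [← eLpNorm_comp_measurePreserving (hf'.1.sub (continuous_bumpSum η).aestronglyMeasurable)
    (PiLp.volume_preserving_ofLp (Fin n))] at hL
end
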